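/- arXiv:2307.15726 — 2 statements merged into one kernel-verified Lean document; each statement's English description precedes it below -/
import Mathlib

section
/- Let (W,S) be a Coxeter system and I_• = [I_0,…,I_d] a singlestep expression expressing the (I_0,I_d)-coset p. Then for every (I_0,I_d)-coset q with q ≤ p in the Bruhat order, there exists a path subordinate to I_• with terminus q. Hence the set of termini of paths subordinate to I_• equals {q : q ≤ p}. -/
/-!
The Demazure product `w_{I_0} * ⋯ * w_{I_d}` is the product of a subword of the concatenation
of reduced words for the `w_{I_k}`. By the strong exchange condition (proved with Humphreys'
sign-twisted permutation representation) the set of such subword products is closed downwards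
in the Bruhat order, so `min q ≤ min p ≤ max p` is a subword product too. Splitting that subword
along the blocks writes `min q = c_0 ⋯ c_d` with `c_k ∈ W_{I_k}`, because a reduced word of an
element of `W_{I_k}` only uses simple reflections of `W_{I_k}`. The double cosets
`W_{I_0} c_0 ⋯ c_{k-1} W_{I_k}` then form a subordinate path, and it ends at `q`.
-/

namespace CoxeterPaper

open CoxeterSystem

variable {B : Type*} {W : Type*} [Group W] {M : CoxeterMatrix B}

/-- The Bruhat order on a Coxeter group: the reflexive-transitive closure of the
relation `a < a * t` for `t` a reflection with length increasing. -/
def BruhatLE (cs : CoxeterSystem M W) (x y : W) : Prop :=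
  Relation.ReflTransGen
    (fun a b => (∃ t, cs.IsReflection t ∧ b = a * t) ∧ cs.length a < cs.length b) x y

/-- One step of the Demazure product with a simple reflection. -/
noncomputable def demStep (cs : CoxeterSystem M W) (x : W) (i : B) : W :=
  if cs.length x < cs.length (x * cs.simple i) then x * cs.simple i else x

/-- The Demazure product of `x` with the word `l`. -/
noncomputable def demWord (cs : CoxeterSystem M W) (x : W) (l : List B) : W :=
  l.foldl (demStep cs) x

/-- The Demazure product (Coxeter monoid product) of two elements: fold the
Demazure action of a reduced word of `y` onto `x`. -/
noncomputable def dem (cs : CoxeterSystem M W) (x y : W) : W :=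
  demWord cs x (Classical.choose (cs.exists_reduced_word y))

/-- The standard parabolic subgroup attached to a set of simple indices. -/
def parabolic (cs : CoxeterSystem M W) (I : Set B) : Subgroup W :=
  Subgroup.closure (cs.simple '' I)

/-- `I` is finitary if the parabolic subgroup `W_I` is finite. -/
def Finitary (cs : CoxeterSystem M W) (I : Set B) : Prop :=
  (parabolic cs I : Set W).Finite

/-- The double coset `W_I w W_J` as a subset of `W`. -/
def doset (cs : CoxeterSystem M W) (I J : Set B) (w : W) : Set W :=
  {x | ∃ a ∈ parabolic cs I, ∃ b ∈ parabolic cs J, x = a * w * b}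

/-- `p` is an `(I,J)`-double coset. -/
def IsDCoset (cs : CoxeterSystem M W) (I J : Set B) (p : Set W) : Prop :=
  ∃ w, p = doset cs I J w

/-- `m` is the Bruhat-minimal element of `p`. -/
def IsMinOf (cs : CoxeterSystem M W) (p : Set W) (m : W) : Prop :=
  m ∈ p ∧ ∀ x ∈ p, BruhatLE cs m x

/-- `m` is the Bruhat-maximal element of `p`. -/
def IsMaxOf (cs : CoxeterSystem M W) (p : Set W) (m : W) : Prop :=
  m ∈ p ∧ ∀ x ∈ p, BruhatLE cs x m

/-- `[I 0, …, I d]` is a singlestep expression. -/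
def IsSinglestep (I : ℕ → Set B) (d : ℕ) : Prop :=
  ∀ k < d, (∃ s, s ∉ I k ∧ I (k + 1) = insert s (I k)) ∨
    (∃ s, s ∈ I k ∧ I (k + 1) = I k \ {s})

/-- `p` is a path subordinate to the singlestep expression `[I 0, …, I d]`. -/
def IsSubPath (cs : CoxeterSystem M W) (I : ℕ → Set B) (d : ℕ) (p : ℕ → Set W) : Prop :=
  p 0 = doset cs (I 0) (I 0) 1 ∧
  (∀ i ≤ d, IsDCoset cs (I 0) (I i) (p i)) ∧
  ∀ k < d, (I k ⊆ I (k + 1) → p k ⊆ p (k + 1)) ∧ (I (k + 1) ⊆ I k → p (k + 1) ⊆ p k)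

/-- The Demazure product `w_{I_0} * w_{I_1} * ⋯ * w_{I_d}` of the longest elements
`wI 0, …, wI d`. -/
noncomputable def exprMax (cs : CoxeterSystem M W) (wI : ℕ → W) (d : ℕ) : W :=
  ((List.range d).map fun k => wI (k + 1)).foldl (dem cs) (wI 0)

theorem conj_eq_iff_of_mul_self {G : Type*} [Group G] {a : G} (ha : a * a = 1) (t u : G) :
    a * t * a = u ↔ t = a * u * a := by
  constructor <;> rintro rfl <;> simp [mul_assoc, ← mul_assoc a a, ha]

section ReflectionRepresentation

open scoped Classical

variable (cs : CoxeterSystem M W)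

/- Humphreys, *Reflection groups and Coxeter groups*, §5.8: `s_i` acts on pairs
(reflection, sign) by conjugation, flipping the sign exactly at `s_i`. -/
noncomputable def simpleReflPerm (i : B) : Equiv.Perm (W × ZMod 2) :=
  Function.Involutive.toPerm
    (fun p => (cs.simple i * p.1 * cs.simple i, p.2 + if p.1 = cs.simple i then 1 else 0))
    (by
      rintro ⟨t, e⟩
      have hs := cs.simple_mul_simple_self i
      have hcond : cs.simple i * t * cs.simple i = cs.simple i ↔ t = cs.simple i := by
        rw [conj_eq_iff_of_mul_self hs, hs, one_mul]
      simp only [hcond, Prod.mk.injEq]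
      refine ⟨by simp [mul_assoc, cs.simple_mul_simple_cancel_left], ?_⟩
      split_ifs <;> simp [add_assoc, CharTwo.add_self_eq_zero])

theorem simpleReflPerm_apply (i : B) (t : W) (e : ZMod 2) :
    simpleReflPerm cs i (t, e) =
      (cs.simple i * t * cs.simple i, e + if t = cs.simple i then 1 else 0) :=
  rfl

theorem simpleReflPerm_mul_pow_apply (i j : B) (k : ℕ) (t : W) (e : ZMod 2) :
    ((simpleReflPerm cs i * simpleReflPerm cs j) ^ k) (t, e) =
      ((cs.simple i * cs.simple j) ^ k * t * ((cs.simple i * cs.simple j) ^ k)⁻¹,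
        e + ∑ r ∈ Finset.range (2 * k),
          if t = (cs.simple j * cs.simple i) ^ r * cs.simple j then 1 else 0) := by
  set g := cs.simple i * cs.simple j
  set h := cs.simple j * cs.simple i
  have hg : g⁻¹ = h := by simp [g, h, cs.inv_simple]
  induction k generalizing t e with
  | zero => simp
  | succ k ih =>
    have hsemi : cs.simple j * g ^ k = h ^ k * cs.simple j :=
      (SemiconjBy.pow_right (by simp [SemiconjBy, g, h, mul_assoc]) k).eq
    have hconj : ∀ u, g ^ k * t * (g ^ k)⁻¹ = u ↔ t = h ^ k * u * g ^ k := by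
      intro u
      rw [← hg, inv_pow]
      constructor <;> rintro rfl <;> group
    rw [pow_succ', Equiv.Perm.mul_apply, Equiv.Perm.mul_apply, ih, simpleReflPerm_apply,
      simpleReflPerm_apply]
    have h0 : h ^ k * cs.simple j * g ^ k = h ^ (2 * k) * cs.simple j := by
      rw [mul_assoc, hsemi, ← mul_assoc, ← pow_add, two_mul]
    have h1 : h ^ k * (cs.simple j * cs.simple i * cs.simple j) * g ^ k =
        h ^ (2 * k + 1) * cs.simple j := by
      calc _ = h ^ k * h * (cs.simple j * g ^ k) := by simp only [h, mul_assoc]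
        _ = h ^ (k + 1 + k) * cs.simple j := by rw [hsemi, ← mul_assoc, ← pow_succ, ← pow_add]
        _ = h ^ (2 * k + 1) * cs.simple j := by ring_nf
    simp only [conj_eq_iff_of_mul_self (cs.simple_mul_simple_self j), hconj, h0, h1,
      Prod.mk.injEq]
    constructor
    · simp [g, pow_succ', mul_inv_rev, mul_assoc, cs.inv_simple]
    · rw [show 2 * (k + 1) = 2 * k + 1 + 1 by ring, Finset.sum_range_succ, Finset.sum_range_succ]
      ring

theorem isLiftable_simpleReflPerm : M.IsLiftable (simpleReflPerm cs) := by
  intro i j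
  ext ⟨t, e⟩ : 1
  have hperiod : ∀ r,
      (cs.simple j * cs.simple i) ^ (M i j + r) = (cs.simple j * cs.simple i) ^ r :=
    fun r => by rw [pow_add, cs.simple_mul_simple_pow', one_mul]
  rw [simpleReflPerm_mul_pow_apply, cs.simple_mul_simple_pow, two_mul, Finset.sum_range_add]
  simp only [hperiod, ← two_mul, Equiv.Perm.one_apply, one_mul, inv_one, mul_one]
  -- the sign contributions cancel in pairs `r`, `r + M i j`
  rw [show (2 : ZMod 2) = 0 from rfl, zero_mul, add_zero]

noncomputable def reflPerm : W →* Equiv.Perm (W × ZMod 2) :=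
  cs.lift ⟨simpleReflPerm cs, isLiftable_simpleReflPerm cs⟩

/-- The parity of the number of times the reflection `t` occurs in the right inversion sequence
of any word for `w`. -/
noncomputable def reflSign (w t : W) : ZMod 2 :=
  (reflPerm cs w (t, 0)).2

theorem reflPerm_simple (i : B) : reflPerm cs (cs.simple i) = simpleReflPerm cs i :=
  cs.lift_apply_simple _ i

theorem reflPerm_apply (w t : W) (e : ZMod 2) :
    reflPerm cs w (t, e) = (w * t * w⁻¹, e + reflSign cs w t) := by
  induction w using cs.simple_induction_left generalizing t e with
  | one => simp [reflSign]
  | mul_simple_left w i ih =>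
    have step : ∀ e, reflPerm cs (cs.simple i * w) (t, e) =
        (cs.simple i * (w * t * w⁻¹) * cs.simple i,
          e + reflSign cs w t + if w * t * w⁻¹ = cs.simple i then 1 else 0) := fun e => by
      rw [map_mul, Equiv.Perm.mul_apply, ih, reflPerm_simple, simpleReflPerm_apply]
    rw [reflSign, step, step]
    simp only [Prod.mk.injEq, mul_inv_rev, cs.inv_simple]
    constructor
    · group
    · ring

theorem reflSign_mul (u v t : W) :
    reflSign cs (u * v) t = reflSign cs u (v * t * v⁻¹) + reflSign cs v t := by
  have := congrArg Prod.snd (reflPerm_apply cs (u * v) t 0)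
  rw [map_mul, Equiv.Perm.mul_apply, reflPerm_apply, reflPerm_apply] at this
  simpa [add_comm] using this.symm

theorem reflSign_one (t : W) : reflSign cs 1 t = 0 := by
  simp [reflSign]

theorem reflSign_simple (i : B) (t : W) :
    reflSign cs (cs.simple i) t = if t = cs.simple i then 1 else 0 := by
  simp [reflSign, reflPerm_simple, simpleReflPerm_apply]

theorem reflSign_inv_conj (w t : W) : reflSign cs w⁻¹ (w * t * w⁻¹) = reflSign cs w t := by
  have := reflSign_mul cs w⁻¹ w t
  rw [inv_mul_cancel, reflSign_one] at this
  rw [eq_neg_of_add_eq_zero_left this.symm, ZMod.neg_eq_self_mod_two]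

theorem reflSign_self {t : W} (ht : cs.IsReflection t) : reflSign cs t t = 1 := by
  obtain ⟨v, i, rfl⟩ := ht
  have h1 :
      cs.simple i * v⁻¹ * (v * cs.simple i * v⁻¹) * (cs.simple i * v⁻¹)⁻¹ = cs.simple i := by
    simp [mul_assoc, cs.inv_simple]
  have h2 : v⁻¹ * (v * cs.simple i * v⁻¹) * v⁻¹⁻¹ = cs.simple i := by group
  conv_lhs => rw [mul_assoc v, reflSign_mul, ← mul_assoc v, h1, reflSign_mul, h2]
  rw [reflSign_inv_conj, reflSign_simple, if_pos rfl, add_left_comm, CharTwo.add_self_eq_zero,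
    add_zero]

theorem mem_rightInvSeq_of_reflSign_eq_one {ω : List B} {t : W}
    (h : reflSign cs (cs.wordProd ω) t = 1) : t ∈ cs.rightInvSeq ω := by
  induction ω with
  | nil => simp [reflSign_one] at h
  | cons i ω ih =>
    rw [cs.wordProd_cons, reflSign_mul, reflSign_simple] at h
    rw [rightInvSeq, List.mem_cons]
    by_cases hi : cs.wordProd ω * t * (cs.wordProd ω)⁻¹ = cs.simple i
    · left
      rw [← hi]
      group
    · rw [if_neg hi, zero_add] at h
      exact Or.inr (ih h)

theorem reflSign_eq_one_of_isRightInversion {w t : W} (h : cs.IsRightInversion w t) :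
    reflSign cs w t = 1 := by
  obtain ⟨ht, hlt⟩ := h
  -- otherwise `t` would also be a right inversion of `w * t`
  have hzero : reflSign cs (w * t) t = 0 := by
    obtain ⟨χ, hχ, hwt⟩ := cs.exists_isReduced (w * t)
    rcases (by decide : ∀ x : ZMod 2, x = 0 ∨ x = 1) (reflSign cs (w * t) t) with h0 | h1
    · exact h0
    · rw [hwt] at h1
      have := (cs.isRightInversion_of_mem_rightInvSeq hχ
        (mem_rightInvSeq_of_reflSign_eq_one cs h1)).2
      rw [← hwt, mul_assoc, ht.mul_self, mul_one] at this
      omega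
  calc reflSign cs w t = reflSign cs (w * t * t) t := by rw [mul_assoc, ht.mul_self, mul_one]
    _ = 1 := by
      rw [reflSign_mul, ht.mul_self, one_mul, ht.inv, hzero, reflSign_self cs ht, zero_add]

theorem exists_wordProd_eraseIdx_of_isRightInversion {ω : List B} {t : W}
    (h : cs.IsRightInversion (cs.wordProd ω) t) :
    ∃ j, cs.wordProd ω * t = cs.wordProd (ω.eraseIdx j) := by
  obtain ⟨j, hj, rfl⟩ := List.getElem_of_mem
    (mem_rightInvSeq_of_reflSign_eq_one cs (reflSign_eq_one_of_isRightInversion cs h))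
  exact ⟨j, by rw [← List.getD_eq_getElem _ 1 hj, cs.wordProd_mul_getD_rightInvSeq]⟩

end ReflectionRepresentation

section Subwords

open scoped List

variable (cs : CoxeterSystem M W)

theorem wordProd_mem_of_forall_simple_mem {H : Subgroup W} {ω : List B}
    (h : ∀ i ∈ ω, cs.simple i ∈ H) : cs.wordProd ω ∈ H :=
  list_prod_mem (by simpa using h)

theorem BruhatLE.exists_sublist_wordProd_eq {L N₀ : List B} {x : W}
    (hx : BruhatLE cs x (cs.wordProd N₀)) (hN₀ : N₀ <+ L) :
    ∃ N, N <+ L ∧ x = cs.wordProd N := by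
  induction hx using Relation.ReflTransGen.head_induction_on with
  | refl => exact ⟨N₀, hN₀, rfl⟩
  | @head a _ hstep _ ih =>
    obtain ⟨⟨t, ht, rfl⟩, hlt⟩ := hstep
    obtain ⟨N, hN, hwN⟩ := ih
    have hback : cs.wordProd N * t = a := by rw [← hwN, mul_assoc, ht.mul_self, mul_one]
    obtain ⟨j, hj⟩ := exists_wordProd_eraseIdx_of_isRightInversion cs
      (ω := N) ⟨ht, by rwa [hback, ← hwN]⟩
    exact ⟨N.eraseIdx j, (N.eraseIdx_sublist j).trans hN, hback.symm.trans hj⟩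

theorem demWord_eq_mul_wordProd_sublist (x : W) (l : List B) :
    ∃ S, S <+ l ∧ demWord cs x l = x * cs.wordProd S := by
  induction l generalizing x with
  | nil => exact ⟨[], List.Sublist.slnil, by simp [demWord]⟩
  | cons i l ih =>
    change ∃ S, S <+ i :: l ∧ demWord cs (demStep cs x i) l = _
    unfold demStep
    split_ifs
    · obtain ⟨S, hS, hxS⟩ := ih (x * cs.simple i)
      exact ⟨i :: S, hS.cons_cons i, by rw [hxS, cs.wordProd_cons, mul_assoc]⟩
    · obtain ⟨S, hS, hxS⟩ := ih x
      exact ⟨S, hS.cons i, hxS⟩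

noncomputable def reducedWord (w : W) : List B :=
  Classical.choose (cs.exists_isReduced w)

theorem isReduced_reducedWord (w : W) : cs.IsReduced (reducedWord cs w) :=
  (Classical.choose_spec (cs.exists_isReduced w)).1

theorem wordProd_reducedWord (w : W) : cs.wordProd (reducedWord cs w) = w :=
  (Classical.choose_spec (cs.exists_isReduced w)).2.symm

theorem exprMax_eq_wordProd_sublist (wI : ℕ → W) (d : ℕ) :
    ∃ N, N <+ ((List.range (d + 1)).map fun k => reducedWord cs (wI k)).flatten ∧
      exprMax cs wI d = cs.wordProd N := by
  induction d with
  | zero => exact ⟨reducedWord cs (wI 0), by simp, (wordProd_reducedWord cs _).symm⟩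
  | succ d ih =>
    obtain ⟨N, hN, hdN⟩ := ih
    obtain ⟨S, hS, hdS⟩ := demWord_eq_mul_wordProd_sublist cs (exprMax cs wI d)
      (reducedWord cs (wI (d + 1)))
    refine ⟨N ++ S, ?_, ?_⟩
    · rw [List.range_succ, List.map_append, List.flatten_append]
      exact hN.append (by simpa using hS)
    · have hstep : exprMax cs wI (d + 1) = dem cs (exprMax cs wI d) (wI (d + 1)) := by
        rw [exprMax, List.range_succ, List.map_append, List.foldl_append]
        rfl
      rw [hstep, dem, ← reducedWord, hdS, hdN, cs.wordProd_append]

theorem exists_prod_eq_wordProd_of_sublist_flatten (ω : ℕ → List B) (H : ℕ → Subgroup W)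
    {n : ℕ} (hω : ∀ k < n, ∀ i ∈ ω k, cs.simple i ∈ H k) {N : List B}
    (hN : N <+ ((List.range n).map ω).flatten) :
    ∃ c : ℕ → W, (∀ k < n, c k ∈ H k) ∧
      cs.wordProd N = ((List.range n).map c).prod := by
  induction n generalizing N with
  | zero => exact ⟨1, by simp, by simp [show N = [] by simpa using hN]⟩
  | succ n ih =>
    rw [List.range_succ, List.map_append, List.flatten_append, List.sublist_append_iff] at hN
    obtain ⟨N₁, N₂, rfl, hN₁, hN₂⟩ := hN
    replace hN₂ : N₂ <+ ω n := by simpa using hN₂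
    obtain ⟨c, hc, hN₁c⟩ := ih (fun k hk => hω k (by omega)) hN₁
    refine ⟨Function.update c n (cs.wordProd N₂), fun k hk => ?_, ?_⟩
    · rcases eq_or_ne k n with rfl | hkn
      · simp only [Function.update_self]
        exact wordProd_mem_of_forall_simple_mem cs fun i hi => hω k hk i (hN₂.subset hi)
      · rw [Function.update_of_ne hkn]
        exact hc k (by omega)
    · rw [List.prod_range_succ, cs.wordProd_append, hN₁c, Function.update_self]
      congr 2
      exact List.map_congr_left fun k hk => (Function.update_of_ne (by simp at hk; omega) _ _).symm

end Subwords

section Parabolic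

variable (cs : CoxeterSystem M W)

theorem exists_wordProd_eq_of_mem_parabolic {I : Set B} {w : W} (hw : w ∈ parabolic cs I) :
    ∃ ω : List B, (∀ i ∈ ω, i ∈ I) ∧ cs.wordProd ω = w := by
  induction hw using Subgroup.closure_induction with
  | mem x hx =>
    obtain ⟨i, hi, rfl⟩ := hx
    exact ⟨[i], by simpa using hi, by simp⟩
  | one => exact ⟨[], by simp, by simp⟩
  | mul x y _ _ hx hy =>
    obtain ⟨ω₁, h₁, rfl⟩ := hx
    obtain ⟨ω₂, h₂, rfl⟩ := hy
    exact ⟨ω₁ ++ ω₂, by simpa [or_imp, forall_and] using ⟨h₁, h₂⟩,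
      cs.wordProd_append _ _⟩
  | inv x _ hx =>
    obtain ⟨ω, h, rfl⟩ := hx
    exact ⟨ω.reverse, by simpa using h, cs.wordProd_reverse ω⟩

theorem mem_parabolic_of_isRightInversion {I : Set B} {w t : W} (hw : w ∈ parabolic cs I)
    (h : cs.IsRightInversion w t) : t ∈ parabolic cs I := by
  obtain ⟨ω, hωI, rfl⟩ := exists_wordProd_eq_of_mem_parabolic cs hw
  obtain ⟨j, hj⟩ := exists_wordProd_eraseIdx_of_isRightInversion cs h
  have hmem : cs.wordProd (ω.eraseIdx j) ∈ parabolic cs I :=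
    wordProd_mem_of_forall_simple_mem cs fun i hi =>
      Subgroup.subset_closure ⟨i, hωI i ((ω.eraseIdx_sublist j).subset hi), rfl⟩
  rw [← hj] at hmem
  simpa using mul_mem (inv_mem hw) hmem

theorem simple_mem_parabolic_of_isReduced {I : Set B} {ω : List B} (hω : cs.IsReduced ω)
    (hωI : cs.wordProd ω ∈ parabolic cs I) {i : B} (hi : i ∈ ω) :
    cs.simple i ∈ parabolic cs I := by
  induction ω with
  | nil => simp at hi
  | cons j ω ih =>
    have hdescent : cs.IsRightInversion (cs.wordProd (j :: ω))⁻¹ (cs.simple j) := by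
      refine ⟨cs.isReflection_simple j, ?_⟩
      rw [← cs.length_inv, mul_inv_rev, inv_inv, cs.inv_simple, cs.length_inv, hω,
        cs.wordProd_cons, ← mul_assoc, cs.simple_mul_simple_self, one_mul]
      exact Nat.lt_succ_of_le (cs.length_wordProd_le ω)
    have hj : cs.simple j ∈ parabolic cs I :=
      mem_parabolic_of_isRightInversion cs (inv_mem hωI) hdescent
    rcases List.mem_cons.mp hi with rfl | hi
    · exact hj
    · refine ih (by simpa using hω.drop 1) ?_ hi
      simpa [cs.wordProd_cons, ← mul_assoc] using mul_mem hj hωI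

theorem doset_eq_of_mem {I J : Set B} {x w : W} (h : x ∈ doset cs I J w) :
    doset cs I J x = doset cs I J w := by
  obtain ⟨a, ha, b, hb, rfl⟩ := h
  ext y
  constructor
  · rintro ⟨a', ha', b', hb', rfl⟩
    exact ⟨a' * a, mul_mem ha' ha, b * b', mul_mem hb hb', by group⟩
  · rintro ⟨a', ha', b', hb', rfl⟩
    exact ⟨a' * a⁻¹, mul_mem ha' (inv_mem ha), b⁻¹ * b', mul_mem (inv_mem hb) hb',
      by group⟩

theorem doset_mul_of_mem_right {I J : Set B} (w : W) {c : W} (hc : c ∈ parabolic cs J) :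
    doset cs I J (w * c) = doset cs I J w :=
  doset_eq_of_mem cs ⟨1, one_mem _, c, hc, by group⟩

theorem doset_mono_right {I J J' : Set B} (h : J ⊆ J') (w : W) :
    doset cs I J w ⊆ doset cs I J' w := by
  rintro x ⟨a, ha, b, hb, rfl⟩
  exact ⟨a, ha, b, Subgroup.closure_mono (Set.image_mono h) hb, rfl⟩

theorem isSubPath_doset_prod (I : ℕ → Set B) (d : ℕ) (c : ℕ → W)
    (hc : ∀ k < d, c k ∈ parabolic cs (I k)) :
    IsSubPath cs I d fun k => doset cs (I 0) (I k) ((List.range k).map c).prod := by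
  refine ⟨by simp, fun k _ => ⟨_, rfl⟩, fun k hk => ⟨fun hsub => ?_, fun hsub => ?_⟩⟩
  · dsimp only
    rw [List.prod_range_succ,
      doset_mul_of_mem_right cs _ (Subgroup.closure_mono (Set.image_mono hsub) (hc k hk))]
    exact doset_mono_right cs hsub _
  · dsimp only
    rw [List.prod_range_succ, ← doset_mul_of_mem_right cs _ (hc k hk)]
    exact doset_mono_right cs hsub _

end Parabolic

theorem le_is_terminus_general (cs : CoxeterSystem M W) (I : ℕ → Set B) (d : ℕ)
    (wI : ℕ → W) (hwI : ∀ i ≤ d, IsMaxOf cs (parabolic cs (I i) : Set W) (wI i))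
    (P : Set W) (MP : W)
    (hMP : IsMaxOf cs P MP) (hexpr : MP = exprMax cs wI d)
    (mP : W) (hmP : IsMinOf cs P mP) :
    ∀ q mq, IsDCoset cs (I 0) (I d) q → IsMinOf cs q mq → BruhatLE cs mq mP →
      ∃ p, IsSubPath cs I d p ∧ p d = q := by
  rintro q mq ⟨wq, rfl⟩ hmq hle
  obtain ⟨N₀, hN₀, hMPN₀⟩ := exprMax_eq_wordProd_sublist cs wI d
  have hmqN₀ : BruhatLE cs mq (cs.wordProd N₀) := by
    rw [← hMPN₀, ← hexpr]
    exact hle.trans (hMP.2 mP hmP.1)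
  obtain ⟨N, hN, rfl⟩ := hmqN₀.exists_sublist_wordProd_eq cs hN₀
  have hletters :
      ∀ k < d + 1, ∀ i ∈ reducedWord cs (wI k), cs.simple i ∈ parabolic cs (I k) :=
    fun k hk _ hi => simple_mem_parabolic_of_isReduced cs (isReduced_reducedWord cs _)
      (by rw [wordProd_reducedWord]; exact (hwI k (by omega)).1) hi
  obtain ⟨c, hc, hNc⟩ := exists_prod_eq_wordProd_of_sublist_flatten cs _ _ hletters hN
  refine ⟨_, isSubPath_doset_prod cs I d c fun k hk => hc k (by omega), ?_⟩
  rw [List.prod_range_succ] at hNc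
  rw [← doset_mul_of_mem_right cs _ (hc d (by omega)), ← hNc, doset_eq_of_mem cs hmq.1]

/-- Every coset `q ≤ p` is the terminus of some path subordinate to a given
singlestep expression for `p`. -/
theorem le_is_terminus (cs : CoxeterSystem M W) (I : ℕ → Set B) (d : ℕ)
    (hss : IsSinglestep I d) (hfin : ∀ i ≤ d, Finitary cs (I i))
    (wI : ℕ → W) (hwI : ∀ i ≤ d, IsMaxOf cs (parabolic cs (I i) : Set W) (wI i))
    (P : Set W) (hP : IsDCoset cs (I 0) (I d) P) (MP : W)
    (hMP : IsMaxOf cs P MP) (hexpr : MP = exprMax cs wI d)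
    (mP : W) (hmP : IsMinOf cs P mP) :
    ∀ q mq, IsDCoset cs (I 0) (I d) q → IsMinOf cs q mq → BruhatLE cs mq mP →
      ∃ p, IsSubPath cs I d p ∧ p d = q :=
  le_is_terminus_general cs I d wI hwI P MP hMP hexpr mP hmP

end CoxeterPaper
end

section
/- Let (W,S) be a Coxeter system with w ∈ W and reduced expression (s_1,…,s_l) for w. Let I, J ⊂ S be finitary. Then the maximal element of the double coset W_I w W_J equals the Demazure product w_I * s_1 * ⋯ * s_l * w_J of the longest element of W_I, the letters of the reduced word, and the longest element of W_J. -/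
namespace CoxeterPaper

open CoxeterSystem

variable {B : Type*} {W : Type*} [Group W] {M : CoxeterMatrix B}

/-!
Every element of `W_I w W_J` is `a * w * b` with `a ≤ w_I` and `b ≤ w_J` in the Bruhat order.
Demazure multiplication `x ↦ x ⋆ s` dominates both `x` and `x * s` and is Bruhat-monotone (the
lifting property), so `w_I ⋆ s_1 ⋆ ⋯ ⋆ s_l ⋆ w_J` dominates `a * w * π τ` for every subword `τ`
of a reduced word of `w_J`; by the subword property these `π τ` are exactly the elements below
`w_J`. Conversely the product stays in the double coset: a letter `s_k` that does not lengthen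
`w_I ⋆ s_1 ⋆ ⋯ ⋆ s_{k-1}` is absorbed into its `W_I`-factor by the strong exchange property, since
`s_1 ⋯ s_k` is reduced; and the subwords `π τ` of `w_J` lie below `w_J`, hence in `W_J`.

The strong exchange property is proved with Tits' representation of `W` on `W × ZMod 2`, whose
sign records the parity of the number of occurrences of a reflection in a left inversion sequence.
-/

open List

open scoped Classical

noncomputable section

theorem prod_map_alternatingWord_two_mul {G : Type*} [Monoid G] (f : B → G) (i j : B) (m : ℕ) :
    ((alternatingWord i j (2 * m)).map f).prod = (f i * f j) ^ m := by
  induction m with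
  | zero => simp [alternatingWord]
  | succ m ih =>
    rw [show 2 * (m + 1) = 2 * m + 1 + 1 by ring, alternatingWord_succ', alternatingWord_succ',
      if_neg (Nat.not_even_two_mul_add_one m), if_pos (even_two_mul m)]
    simp only [map_cons, prod_cons, ih, pow_succ', mul_assoc]

variable (cs : CoxeterSystem M W)

local prefix:100 "s" => cs.simple
local prefix:100 "π" => cs.wordProd
local prefix:100 "ℓ" => cs.length
local prefix:100 "lis" => cs.leftInvSeq

/-- The action of `s i` in Tits' representation of `W` on reflections × signs, extended to all
of `W × ZMod 2`. -/
def signedConj (i : B) (p : W × ZMod 2) : W × ZMod 2 :=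
  (s i * p.1 * s i, p.2 + if p.1 = s i then 1 else 0)

theorem signedConj_involutive (i : B) : Function.Involutive (signedConj cs i) := by
  rintro ⟨x, e⟩
  rcases eq_or_ne x (s i) with rfl | h
  · simp only [signedConj, simple_mul_simple_self, one_mul, if_true, add_assoc, Prod.mk.injEq,
      true_and]
    rw [show (1 : ZMod 2) + 1 = 0 from rfl, add_zero]
  · have hx : s i * (s i * x * s i) * s i = x := by simp [mul_assoc]
    simp [signedConj, hx, h, mul_eq_one_iff_inv_eq, eq_comm (a := s i)]

def signedConjPerm (i : B) : Equiv.Perm (W × ZMod 2) := (signedConj_involutive cs i).toPerm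

theorem prod_map_signedConjPerm_apply (ω : List B) (x : W) (e : ZMod 2) :
    (ω.map (signedConjPerm cs)).prod (x, e) =
      (π ω * x * (π ω)⁻¹, e + (lis ω).count (π ω * x * (π ω)⁻¹)) := by
  induction ω with
  | nil => simp
  | cons i ω ih =>
    set y := π ω * x * (π ω)⁻¹
    have hconj : π (i :: ω) * x * (π (i :: ω))⁻¹ = MulAut.conj (s i) y := by
      simp [y, wordProd_cons, mul_assoc]
    rw [map_cons, prod_cons, Equiv.Perm.mul_apply, ih, hconj, leftInvSeq, count_cons,
      count_map_of_injective _ _ (MulAut.conj (s i)).injective]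
    simp only [signedConjPerm, Function.Involutive.coe_toPerm, signedConj, MulAut.conj_apply,
      inv_simple, Prod.mk.injEq, true_and]
    rw [Nat.cast_add, ← add_assoc]
    simp [mul_eq_one_iff_inv_eq, eq_comm (a := s i)]

theorem even_count_leftInvSeq_alternatingWord (i j : B) (x : W) :
    Even ((lis (alternatingWord i j (2 * M i j))).count x) := by
  set m := M i j
  set L := lis (alternatingWord i j (2 * m))
  have hlen : L.length = 2 * m := by simp [L]
  have hperiod : L.drop m = L.take m := by
    refine ext_getElem (by simp [hlen]; omega) fun k h₁ _ => ?_
    simp only [length_drop, hlen] at h₁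
    simp only [getElem_drop, getElem_take]
    rw [getElem_leftInvSeq_alternatingWord cs i j m (m + k) (by omega),
      getElem_leftInvSeq_alternatingWord cs i j m k (by omega)]
    simp only [prod_alternatingWord_eq_mul_pow, Nat.not_even_two_mul_add_one, if_false]
    rw [show (2 * (m + k) + 1) / 2 = m + k by omega, show (2 * k + 1) / 2 = k by omega, pow_add,
      simple_mul_simple_pow', one_mul]
  rw [← take_append_drop m L, count_append, hperiod]
  exact ⟨_, rfl⟩

theorem isLiftable_signedConjPerm : M.IsLiftable (signedConjPerm cs) := by
  intro i j
  ext ⟨x, e⟩ : 1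
  have hπ : π (alternatingWord i j (2 * M i j)) = 1 := by
    rw [wordProd, prod_map_alternatingWord_two_mul, simple_mul_simple_pow]
  rw [← prod_map_alternatingWord_two_mul, prod_map_signedConjPerm_apply, hπ,
    (ZMod.natCast_eq_zero_iff_even).mpr (even_count_leftInvSeq_alternatingWord cs i j _)]
  simp

def signedRep : W →* Equiv.Perm (W × ZMod 2) := cs.lift ⟨_, isLiftable_signedConjPerm cs⟩

theorem signedRep_simple (i : B) : signedRep cs (s i) = signedConjPerm cs i :=
  cs.lift_apply_simple _ i

theorem signedRep_wordProd_apply (ω : List B) (x : W) (e : ZMod 2) :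
    signedRep cs (π ω) (x, e) =
      (π ω * x * (π ω)⁻¹, e + (lis ω).count (π ω * x * (π ω)⁻¹)) := by
  have : signedRep cs ∘ cs.simple = signedConjPerm cs := funext (signedRep_simple cs)
  rw [wordProd, map_list_prod, map_map, this, prod_map_signedConjPerm_apply, wordProd]

theorem signedRep_apply (g x : W) (e : ZMod 2) :
    signedRep cs g (x, e) = (g * x * g⁻¹, e + (signedRep cs g (x, 0)).2) := by
  obtain ⟨ω, rfl⟩ := cs.wordProd_surjective g
  simp [signedRep_wordProd_apply]

theorem signedRep_reflection_self {t : W} (ht : cs.IsReflection t) (e : ZMod 2) :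
    signedRep cs t (t, e) = (t, e + 1) := by
  obtain ⟨w, i, rfl⟩ := ht
  set t := w * s i * w⁻¹
  set c := (signedRep cs w⁻¹ (t, 0)).2
  set d := (signedRep cs w (s i, 0)).2
  have hw : w⁻¹ * t * w⁻¹⁻¹ = s i := by simp [t, mul_assoc]
  have hw' : w * s i * w⁻¹ = t := rfl
  have hcd : c + d = 0 := by
    have h : signedRep cs w (signedRep cs w⁻¹ (t, 0)) = (t, 0) := by
      rw [← Equiv.Perm.mul_apply, ← map_mul, mul_inv_cancel, map_one, Equiv.Perm.one_apply]
    rw [signedRep_apply cs w⁻¹, hw, zero_add, signedRep_apply cs w, hw'] at h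
    exact congrArg Prod.snd h
  calc signedRep cs t (t, e)
      = signedRep cs w (signedRep cs (s i) (signedRep cs w⁻¹ (t, e))) := by
        simp only [t, map_mul, Equiv.Perm.mul_apply]
    _ = (t, e + c + 1 + d) := by
        have hs : signedConjPerm cs i (s i, e + c) = (s i, e + c + 1) := by
          simp [signedConjPerm, signedConj]
        rw [signedRep_apply cs w⁻¹, hw, signedRep_simple, hs, signedRep_apply cs w, hw']
    _ = (t, e + 1) := by rw [show e + c + 1 + d = e + 1 + (c + d) by ring, hcd, add_zero]

theorem mem_leftInvSeq_of_isLeftInversion {ω : List B} {t : W}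
    (ht : cs.IsLeftInversion (π ω) t) : t ∈ lis ω := by
  by_contra hnot
  obtain ⟨δ, hδ, hδt⟩ := cs.exists_isReduced (t * π ω)
  have hωδ : π ω = t * π δ := by rw [← hδt, ← mul_assoc, ht.1.mul_self, one_mul]
  have hnot' : t ∉ lis δ := fun hmem => by
    have := (cs.isLeftInversion_of_mem_leftInvSeq hδ hmem).2
    rw [← hδt, ← mul_assoc, ht.1.mul_self, one_mul] at this
    exact absurd ht.2 (not_lt.mpr this.le)
  -- The sign of `signedRep (π ω) (x, 0)` is `0` when read off `ω`, but `1` when read off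
  -- `π ω = t * π δ`.
  set x := (π ω)⁻¹ * t * π ω
  have hx : π ω * x * (π ω)⁻¹ = t := by simp [x, mul_assoc]
  have hxδ : π δ * x * (π δ)⁻¹ = t := by simp [x, ← hδt, mul_assoc]
  have h₁ := signedRep_wordProd_apply cs ω x 0
  rw [hx, count_eq_zero.mpr hnot, hωδ, map_mul, Equiv.Perm.mul_apply, signedRep_wordProd_apply,
    hxδ, count_eq_zero.mpr hnot', signedRep_reflection_self cs ht.1] at h₁
  simp at h₁

theorem exists_sublist_wordProd_eq_mul_of_isRightInversion {ω : List B} {t : W}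
    (ht : cs.IsRightInversion (π ω) t) :
    ∃ δ, δ <+ ω ∧ δ.length + 1 = ω.length ∧ π δ = π ω * t := by
  set t' := π ω * t * (π ω)⁻¹
  have ht' : cs.IsLeftInversion (π ω) t' := by
    refine ⟨ht.1.conj _, ?_⟩
    simpa [t', mul_assoc] using ht.2
  obtain ⟨j, hj, hjt⟩ := getElem_of_mem (mem_leftInvSeq_of_isLeftInversion cs ht')
  rw [length_leftInvSeq] at hj
  refine ⟨ω.eraseIdx j, eraseIdx_sublist ω j, length_eraseIdx_add_one hj, ?_⟩
  rw [← getD_leftInvSeq_mul_wordProd, getD_eq_getElem _ _ (by simpa using hj), hjt]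
  simp [t', mul_assoc]

theorem exists_reduced_sublist (ω : List B) : ∃ δ, δ <+ ω ∧ cs.IsReduced δ ∧ π δ = π ω := by
  induction ω using reverseRecOn with
  | nil => exact ⟨[], Sublist.refl _, by simp [CoxeterSystem.IsReduced], rfl⟩
  | append_singleton ω i ih =>
    obtain ⟨δ, hsub, hδ, hδω⟩ := ih
    rw [wordProd_append, wordProd_singleton, ← hδω]
    rcases cs.length_mul_simple (π δ) i with hlen | hlen
    · refine ⟨δ ++ [i], hsub.append (Sublist.refl _), ?_, by simp [wordProd_append]⟩
      rw [CoxeterSystem.IsReduced, wordProd_append, wordProd_singleton, hlen, hδ, length_append,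
        length_singleton]
    · obtain ⟨δ', hsub', hlen', hδ'⟩ := exists_sublist_wordProd_eq_mul_of_isRightInversion cs
        (ω := δ) ⟨cs.isReflection_simple i, by omega⟩
      refine ⟨δ', hsub'.trans (hsub.trans (sublist_append_left _ _)), ?_, hδ'⟩
      rw [CoxeterSystem.IsReduced, hδ']
      rw [CoxeterSystem.IsReduced] at hδ
      omega

theorem bruhatLE_refl (x : W) : BruhatLE cs x x := .refl

variable {cs} in
theorem BruhatLE.trans {x y z : W} (h₁ : BruhatLE cs x y) (h₂ : BruhatLE cs y z) :
    BruhatLE cs x z :=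
  Relation.ReflTransGen.trans h₁ h₂

variable {cs} in
theorem BruhatLE.length_le {x y : W} (h : BruhatLE cs x y) : ℓ x ≤ ℓ y := by
  induction h with
  | refl => exact le_rfl
  | tail _ hstep ih => exact ih.trans hstep.2.le

theorem bruhatLE_mul_reflection {x t : W} (ht : cs.IsReflection t) (h : ℓ x < ℓ (x * t)) :
    BruhatLE cs x (x * t) :=
  .single ⟨⟨t, ht, rfl⟩, h⟩

theorem mul_simple_bruhatLE {x : W} {i : B} (h : ℓ (x * s i) < ℓ x) :
    BruhatLE cs (x * s i) x := by
  simpa using bruhatLE_mul_reflection cs (cs.isReflection_simple i) (x := x * s i) (by simpa)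

variable {cs} in
theorem BruhatLE.exists_sublist_wordProd_eq_s15 {ω : List B} {u : W} (h : BruhatLE cs u (π ω)) :
    ∃ τ, τ <+ ω ∧ π τ = u := by
  induction h using Relation.ReflTransGen.head_induction_on with
  | refl => exact ⟨ω, Sublist.refl ω, rfl⟩
  | head hstep _ ih =>
    obtain ⟨⟨t, ht, rfl⟩, hlen⟩ := hstep
    obtain ⟨τ, hτ, hτeq⟩ := ih
    obtain ⟨δ, hδ, -, hδeq⟩ := exists_sublist_wordProd_eq_mul_of_isRightInversion cs (ω := τ)
      ⟨ht, by simpa [hτeq, mul_assoc, ht.mul_self] using hlen⟩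
    exact ⟨δ, hδ.trans hτ, by rw [hδeq, hτeq, mul_assoc, ht.mul_self, mul_one]⟩

theorem demStep_of_length_lt {x : W} {i : B} (h : ℓ x < ℓ (x * s i)) :
    demStep cs x i = x * s i :=
  if_pos h

theorem demStep_of_length_mul_lt {x : W} {i : B} (h : ℓ (x * s i) < ℓ x) :
    demStep cs x i = x :=
  if_neg h.asymm

theorem bruhatLE_demStep (x : W) (i : B) : BruhatLE cs x (demStep cs x i) := by
  rcases (cs.length_mul_simple_ne x i).lt_or_gt with h | h
  · rw [demStep_of_length_mul_lt cs h]
    exact bruhatLE_refl cs x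
  · rw [demStep_of_length_lt cs h]
    exact bruhatLE_mul_reflection cs (cs.isReflection_simple i) h

theorem mul_simple_bruhatLE_demStep (x : W) (i : B) :
    BruhatLE cs (x * s i) (demStep cs x i) := by
  rcases (cs.length_mul_simple_ne x i).lt_or_gt with h | h
  · rw [demStep_of_length_mul_lt cs h]
    exact mul_simple_bruhatLE cs h
  · rw [demStep_of_length_lt cs h]
    exact bruhatLE_refl cs _

/-- The lifting property and the subword property are proved simultaneously by induction on `n`
through this statement. -/
def DemStepMonoBelow (n : ℕ) : Prop :=
  ∀ ⦃u w : W⦄, ℓ w < n → BruhatLE cs u w → ∀ i, BruhatLE cs (demStep cs u i) (demStep cs w i)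

variable {cs}

theorem DemStepMonoBelow.mono {m n : ℕ} (h : DemStepMonoBelow cs n) (hmn : m ≤ n) :
    DemStepMonoBelow cs m :=
  fun _ _ hw => h (hw.trans_le hmn)

theorem DemStepMonoBelow.wordProd_bruhatLE_of_sublist {n : ℕ} (h : DemStepMonoBelow cs n)
    {ω τ : List B} (hω : cs.IsReduced ω) (hlen : ω.length ≤ n) (hsub : τ <+ ω) :
    BruhatLE cs (π τ) (π ω) := by
  induction ω using reverseRecOn generalizing τ with
  | nil => rw [sublist_nil.mp hsub]; exact bruhatLE_refl cs _
  | append_singleton σ i ih =>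
    have hσ : cs.IsReduced σ := by simpa using hω.take σ.length
    have hσi : ℓ (π σ) < ℓ (π σ * s i) := by
      have := hω.eq
      rw [wordProd_append, wordProd_singleton, length_append, length_singleton] at this
      rw [this, hσ.eq]
      omega
    rw [length_append, length_singleton] at hlen
    obtain ⟨x, y, rfl, hx, hy⟩ := sublist_append_iff.mp hsub
    have hxσ := ih hσ (by omega) hx
    rcases sublist_singleton.mp hy with rfl | rfl
    · rw [append_nil, wordProd_append, wordProd_singleton]
      exact hxσ.trans (bruhatLE_mul_reflection cs (cs.isReflection_simple i) hσi)
    · have hmono := h (by rw [hσ.eq]; omega) hxσ i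
      rw [demStep_of_length_lt cs hσi] at hmono
      simp only [wordProd_append, wordProd_singleton]
      exact (mul_simple_bruhatLE_demStep cs _ i).trans hmono

theorem DemStepMonoBelow.mul_simple_bruhatLE {u w : W} {i : B} (h : DemStepMonoBelow cs (ℓ w))
    (hu : BruhatLE cs u w) (hw : ℓ (w * s i) < ℓ w) : BruhatLE cs (u * s i) w := by
  rcases (cs.length_mul_simple_ne u i).lt_or_gt with hui | hui
  · exact (CoxeterPaper.mul_simple_bruhatLE cs hui).trans hu
  obtain ⟨δ, hδ, hδw⟩ := cs.exists_isReduced (w * s i)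
  have hδi : π (δ ++ [i]) = w := by simp [wordProd_append, ← hδw, mul_assoc]
  have hred : cs.IsReduced (δ ++ [i]) := by
    have := cs.length_mul_simple w i
    rw [CoxeterSystem.IsReduced, hδi, length_append, length_singleton, ← hδ.eq, ← hδw]
    omega
  rw [← hδi] at hu ⊢
  obtain ⟨τ₀, hτ₀, rfl⟩ := hu.exists_sublist_wordProd_eq_s15
  obtain ⟨τ, hτ, hτred, hττ₀⟩ := exists_reduced_sublist cs τ₀
  rw [← hττ₀] at hui ⊢
  obtain ⟨x, y, rfl, hx, hy⟩ := sublist_append_iff.mp (hτ.trans hτ₀)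
  rcases sublist_singleton.mp hy with rfl | rfl
  · rw [append_nil, ← wordProd_singleton cs i, ← wordProd_append]
    exact h.wordProd_bruhatLE_of_sublist hred (by rw [← hred.eq, hδi]) (hx.append (Sublist.refl _))
  · have := cs.length_wordProd_le x
    rw [hτred.eq, wordProd_append, wordProd_singleton, simple_mul_simple_cancel_right,
      length_append, length_singleton] at hui
    omega

theorem DemStepMonoBelow.demStep_bruhatLE_demStep_mul {a t : W}
    (h : DemStepMonoBelow cs (ℓ (a * t))) (ht : cs.IsReflection t) (hat : ℓ a < ℓ (a * t)) (i : B) :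
    BruhatLE cs (demStep cs a i) (demStep cs (a * t) i) := by
  have hstep := bruhatLE_mul_reflection cs ht hat
  rcases (cs.length_mul_simple_ne a i).lt_or_gt with hai | hai
  · rw [demStep_of_length_mul_lt cs hai]
    exact hstep.trans (bruhatLE_demStep cs _ i)
  rw [demStep_of_length_lt cs hai]
  rcases (cs.length_mul_simple_ne (a * t) i).lt_or_gt with hati | hati
  · rw [demStep_of_length_mul_lt cs hati]
    exact h.mul_simple_bruhatLE hstep hati
  · rw [demStep_of_length_lt cs hati]
    have hconj : a * t * s i = a * s i * (s i * t * s i) := by simp [mul_assoc]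
    have := cs.length_mul_simple a i
    rw [hconj] at hati ⊢
    refine bruhatLE_mul_reflection cs (by simpa using ht.conj (s i)) ?_
    omega

theorem DemStepMonoBelow.succ {n : ℕ} (h : DemStepMonoBelow cs n) :
    DemStepMonoBelow cs (n + 1) := by
  intro u w hw hu i
  induction hu using Relation.ReflTransGen.head_induction_on with
  | refl => exact bruhatLE_refl cs _
  | @head a _ hstep hrest ih =>
    obtain ⟨⟨t, ht, rfl⟩, hlen⟩ := hstep
    have hle : ℓ (a * t) ≤ n := by have := BruhatLE.length_le hrest; omega
    exact ((h.mono hle).demStep_bruhatLE_demStep_mul ht hlen i).trans ih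

variable (cs)

theorem demStepMonoBelow (n : ℕ) : DemStepMonoBelow cs n := by
  induction n with
  | zero => intro _ _ hw; omega
  | succ n ih => exact ih.succ

variable {cs}

theorem BruhatLE.demStep {u w : W} (h : BruhatLE cs u w) (i : B) :
    BruhatLE cs (demStep cs u i) (demStep cs w i) :=
  demStepMonoBelow cs (ℓ w + 1) (lt_add_one _) h i

theorem wordProd_bruhatLE_of_sublist {ω τ : List B} (hω : cs.IsReduced ω) (hsub : τ <+ ω) :
    BruhatLE cs (π τ) (π ω) :=
  (demStepMonoBelow cs _).wordProd_bruhatLE_of_sublist hω le_rfl hsub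

theorem demWord_append_singleton (x : W) (ω : List B) (i : B) :
    demWord cs x (ω ++ [i]) = demStep cs (demWord cs x ω) i := by
  simp [demWord]

theorem BruhatLE.mul_wordProd_bruhatLE_demWord {u x : W} (hu : BruhatLE cs u x) {ω τ : List B}
    (hsub : τ <+ ω) : BruhatLE cs (u * π τ) (demWord cs x ω) := by
  induction ω using reverseRecOn generalizing τ with
  | nil => simpa [sublist_nil.mp hsub, demWord] using hu
  | append_singleton ω i ih =>
    rw [demWord_append_singleton]
    obtain ⟨y, z, rfl, hy, hz⟩ := sublist_append_iff.mp hsub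
    rcases sublist_singleton.mp hz with rfl | rfl
    · rw [append_nil]
      exact (ih hy).trans (bruhatLE_demStep cs _ i)
    · rw [wordProd_append, wordProd_singleton, ← mul_assoc]
      exact (mul_simple_bruhatLE_demStep cs _ i).trans ((ih hy).demStep i)

variable (cs)

theorem exists_sublist_demWord_eq_mul (x : W) (ω : List B) :
    ∃ τ, τ <+ ω ∧ demWord cs x ω = x * π τ := by
  induction ω using reverseRecOn with
  | nil => exact ⟨[], Sublist.refl _, by simp [demWord]⟩
  | append_singleton ω i ih =>
    obtain ⟨τ, hτ, hτeq⟩ := ih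
    rw [demWord_append_singleton]
    rcases (cs.length_mul_simple_ne (demWord cs x ω) i).lt_or_gt with h | h
    · exact ⟨τ, hτ.trans (sublist_append_left ω [i]), by rw [demStep_of_length_mul_lt cs h, hτeq]⟩
    · refine ⟨τ ++ [i], hτ.append (Sublist.refl _), ?_⟩
      rw [demStep_of_length_lt cs h, hτeq, wordProd_append, wordProd_singleton, mul_assoc]

theorem exists_isReduced_dem_eq_demWord (x y : W) :
    ∃ γ, cs.IsReduced γ ∧ π γ = y ∧ dem cs x y = demWord cs x γ :=
  have h := Classical.choose_spec (cs.exists_isReduced y)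
  ⟨_, h.1, h.2.symm, rfl⟩

variable {cs}

theorem wordProd_mem_parabolic {I : Set B} {α : List B} (hα : ∀ b ∈ α, b ∈ I) :
    π α ∈ parabolic cs I :=
  Subgroup.list_prod_mem _ fun _ hx => by
    obtain ⟨b, hb, rfl⟩ := mem_map.mp hx
    exact Subgroup.subset_closure ⟨b, hα b hb, rfl⟩

theorem exists_word_of_mem_parabolic {I : Set B} {a : W} (ha : a ∈ parabolic cs I) :
    ∃ α : List B, (∀ b ∈ α, b ∈ I) ∧ π α = a := by
  induction ha using Subgroup.closure_induction with
  | mem x hx =>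
    obtain ⟨i, hi, rfl⟩ := hx
    exact ⟨[i], by simpa using hi, by simp⟩
  | one => exact ⟨[], by simp, by simp⟩
  | mul x y _ _ ihx ihy =>
    obtain ⟨α, hα, rfl⟩ := ihx
    obtain ⟨β, hβ, rfl⟩ := ihy
    exact ⟨α ++ β, by simpa [or_imp, forall_and] using ⟨hα, hβ⟩, wordProd_append cs α β⟩
  | inv x _ ihx =>
    obtain ⟨α, hα, rfl⟩ := ihx
    exact ⟨α.reverse, by simpa using hα, wordProd_reverse cs α⟩

theorem exists_isReduced_of_mem_parabolic {I : Set B} {a : W} (ha : a ∈ parabolic cs I) :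
    ∃ α : List B, (∀ b ∈ α, b ∈ I) ∧ cs.IsReduced α ∧ π α = a := by
  obtain ⟨α₀, hα₀, rfl⟩ := exists_word_of_mem_parabolic ha
  obtain ⟨α, hsub, hα, hαα₀⟩ := exists_reduced_sublist cs α₀
  exact ⟨α, fun b hb => hα₀ b (hsub.subset hb), hα, hαα₀⟩

theorem BruhatLE.mem_parabolic {I : Set B} {u w : W} (h : BruhatLE cs u w)
    (hw : w ∈ parabolic cs I) : u ∈ parabolic cs I := by
  obtain ⟨α, hα, rfl⟩ := exists_word_of_mem_parabolic hw
  obtain ⟨τ, hτ, rfl⟩ := h.exists_sublist_wordProd_eq_s15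
  exact wordProd_mem_parabolic fun b hb => hα b (hτ.subset hb)

theorem exists_parabolic_demStep_eq {I : Set B} {a v : W} (ha : a ∈ parabolic cs I)
    (hlen : ℓ (a * v) = ℓ a + ℓ v) {i : B} (hv : ℓ v < ℓ (v * s i)) :
    ∃ a' ∈ parabolic cs I, demStep cs (a * v) i = a' * (v * s i) ∧
      ℓ (a' * (v * s i)) = ℓ a' + ℓ (v * s i) := by
  rcases (cs.length_mul_simple_ne (a * v) i).symm.lt_or_gt with hd | hd
  · refine ⟨a, ha, by rw [demStep_of_length_lt cs hd, mul_assoc], ?_⟩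
    have := cs.length_mul_simple v i
    have := cs.length_mul_simple (a * v) i
    rw [← mul_assoc]
    omega
  -- A reduced word of `a * v` is `α ++ ν`; the exchanged letter cannot lie in `ν`, as `v < v s`.
  rw [demStep_of_length_mul_lt cs hd]
  obtain ⟨α, hαI, hα, rfl⟩ := exists_isReduced_of_mem_parabolic ha
  obtain ⟨ν, hν, rfl⟩ := cs.exists_isReduced v
  obtain ⟨δ, hδ, hδlen, hδeq⟩ := exists_sublist_wordProd_eq_mul_of_isRightInversion cs
    (ω := α ++ ν) ⟨cs.isReflection_simple i, by rwa [wordProd_append]⟩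
  obtain ⟨d₁, d₂, rfl, hd₁, hd₂⟩ := sublist_append_iff.mp hδ
  simp only [length_append] at hδlen
  rw [wordProd_append, wordProd_append] at hδeq
  rcases hd₂.length_le.lt_or_eq with hlt | heq
  · have hd₁α : d₁ = α := hd₁.eq_of_length (by have := hd₁.length_le; omega)
    have hd₂ν : π d₂ = π ν * s i := by rw [hd₁α, mul_assoc] at hδeq; exact mul_left_cancel hδeq
    have := cs.length_wordProd_le d₂
    rw [hd₂ν] at this
    rw [hν.eq] at hv
    omega
  · rw [hd₂.eq_of_length heq] at hδeq
    have hd₁I : π d₁ ∈ parabolic cs I := wordProd_mem_parabolic fun b hb => hαI b (hd₁.subset hb)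
    have hX : π α * π ν = π d₁ * (π ν * s i) := by
      rw [← mul_assoc, hδeq, simple_mul_simple_cancel_right]
    refine ⟨π d₁, hd₁I, hX, ?_⟩
    have hsub := cs.length_mul_le (π d₁) (π ν * s i)
    rw [← hX, hlen] at hsub ⊢
    have := hα.eq
    have := cs.length_wordProd_le d₁
    have := cs.length_mul_simple (π ν) i
    omega

theorem exists_parabolic_demWord_eq {I : Set B} {a : W} (ha : a ∈ parabolic cs I) {l : List B}
    (hl : cs.IsReduced l) :
    ∃ a' ∈ parabolic cs I, demWord cs a l = a' * π l ∧ ℓ (a' * π l) = ℓ a' + ℓ (π l) := by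
  induction l using reverseRecOn with
  | nil => exact ⟨a, ha, by simp [demWord]⟩
  | append_singleton l i ih =>
    have hl' : cs.IsReduced l := by simpa using hl.take l.length
    have hli : ℓ (π l) < ℓ (π l * s i) := by
      have := hl.eq
      rw [wordProd_append, wordProd_singleton, length_append, length_singleton] at this
      rw [this, hl'.eq]
      omega
    obtain ⟨a₁, ha₁, heq, hlen⟩ := ih hl'
    rw [demWord_append_singleton, heq, wordProd_append, wordProd_singleton]
    exact exists_parabolic_demStep_eq ha₁ hlen hli

end

theorem max_doset_demazure_general (cs : CoxeterSystem M W) (I J : Set B) (wI wJ : W)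
    (hwI : IsMaxOf cs (parabolic cs I : Set W) wI)
    (hwJ : IsMaxOf cs (parabolic cs J : Set W) wJ)
    (l : List B) (w : W) (hw : w = cs.wordProd l) (hred : l.length = cs.length w) :
    IsMaxOf cs (doset cs I J w) (dem cs (demWord cs wI l) wJ) := by
  have hl : cs.IsReduced l := by rw [CoxeterSystem.IsReduced, ← hw, hred]
  subst hw
  obtain ⟨γ, hγ, rfl, hdem⟩ := exists_isReduced_dem_eq_demWord cs (demWord cs wI l) wJ
  rw [hdem]
  constructor
  · obtain ⟨a, ha, hX, -⟩ := exists_parabolic_demWord_eq hwI.1 hl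
    obtain ⟨τ, hτ, hτeq⟩ := exists_sublist_demWord_eq_mul cs (demWord cs wI l) γ
    have hτJ : cs.wordProd τ ∈ parabolic cs J :=
      (wordProd_bruhatLE_of_sublist hγ hτ).mem_parabolic hwJ.1
    exact ⟨a, ha, cs.wordProd τ, hτJ, by rw [hτeq, hX]⟩
  · rintro _ ⟨a, ha, b, hb, rfl⟩
    obtain ⟨τ, hτ, rfl⟩ := (hwJ.2 b hb).exists_sublist_wordProd_eq_s15
    have haX := (hwI.2 a ha).mul_wordProd_bruhatLE_demWord (Sublist.refl l)
    exact haX.mul_wordProd_bruhatLE_demWord hτ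

/-- The maximal element of `W_I w W_J` is the Demazure product
`w_I * s_1 * ⋯ * s_l * w_J` for any reduced word `(s_1, …, s_l)` of `w`. -/
theorem max_doset_demazure (cs : CoxeterSystem M W) (I J : Set B)
    (hI : Finitary cs I) (hJ : Finitary cs J) (wI wJ : W)
    (hwI : IsMaxOf cs (parabolic cs I : Set W) wI)
    (hwJ : IsMaxOf cs (parabolic cs J : Set W) wJ)
    (l : List B) (w : W) (hw : w = cs.wordProd l) (hred : l.length = cs.length w) :
    IsMaxOf cs (doset cs I J w) (dem cs (demWord cs wI l) wJ) :=
  max_doset_demazure_general cs I J wI wJ hwI hwJ l w hw hred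

end CoxeterPaper
end
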